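/- arXiv:2212.14516 — 4 statements merged into one kernel-verified Lean document; each statement's English description precedes it below -/
import Mathlib

section
/- Let s and b be integers with s+1 ≥ b ≥ 0. Let Q = v_0, v_1, ..., v_{s+1} be a path in a graph, let I be a nonempty independent set of vertices contained in {v_1, ..., v_s}, and let B be a set of b edges of Q such that no edge in B is incident to any vertex of I. Then |I| ≤ ⌈(s - b)/2⌉. -/
open Finset

section PathEdges

variable {n : ℕ}

-- On the path `0 — 1 — ⋯ — n`, edge `i : Fin n` joins the vertices `i.castSucc` and `i.succ`.
def leftEdges (N : Finset (Fin (n + 1))) : Finset (Fin n) :=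
  univ.filter fun i => i.succ ∈ N

def rightEdges (N : Finset (Fin (n + 1))) : Finset (Fin n) :=
  univ.filter fun i => i.castSucc ∈ N

theorem card_leftEdges {N : Finset (Fin (n + 1))} (h0 : 0 ∉ N) : #(leftEdges N) = #N := by
  rw [← card_map (Fin.succEmb n)]
  congr 1
  ext j
  cases j using Fin.cases with
  | zero => simp [leftEdges, h0, Fin.succ_ne_zero]
  | succ j => simp [leftEdges]

theorem card_rightEdges {N : Finset (Fin (n + 1))} (hlast : Fin.last n ∉ N) :
    #(rightEdges N) = #N := by
  rw [← card_map (Fin.castSuccEmb (n := n))]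
  congr 1
  ext j
  cases j using Fin.lastCases with
  | last => simp [rightEdges, hlast, Fin.castSucc_ne_last]
  | cast j => simp [rightEdges]

/-- Each vertex of an independent set `N` of interior vertices owns its two incident edges, and
no edge is owned twice; edges of `B` avoid `N` altogether. -/
theorem two_mul_card_add_card_le_of_independent {N : Finset (Fin (n + 1))} {B : Finset (Fin n)}
    (h0 : 0 ∉ N) (hlast : Fin.last n ∉ N) (hind : ∀ i : Fin n, i.castSucc ∈ N → i.succ ∉ N)
    (hB : ∀ i ∈ B, i.castSucc ∉ N ∧ i.succ ∉ N) : 2 * #N + #B ≤ n := by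
  have hLR : Disjoint (leftEdges N) (rightEdges N) :=
    disjoint_left.2 fun i hl hr => hind i (mem_filter.1 hr).2 (mem_filter.1 hl).2
  have hB' : Disjoint (leftEdges N ∪ rightEdges N) B :=
    disjoint_union_left.2
      ⟨disjoint_left.2 fun i hl hi => (hB i hi).2 (mem_filter.1 hl).2,
       disjoint_left.2 fun i hr hi => (hB i hi).1 (mem_filter.1 hr).2⟩
  calc 2 * #N + #B = #(leftEdges N) + #(rightEdges N) + #B := by
        rw [card_leftEdges h0, card_rightEdges hlast]; ring
    _ = #(leftEdges N ∪ rightEdges N ∪ B) := by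
        rw [card_union_of_disjoint hB', card_union_of_disjoint hLR]
    _ ≤ #(univ : Finset (Fin n)) := card_le_univ _
    _ = n := card_fin n

end PathEdges

theorem stmt_0_general {α : Type*} (G : SimpleGraph α) (s b : ℕ)
    (v : Fin (s + 2) → α)
    (hadj : ∀ i : Fin (s + 1), G.Adj (v i.castSucc) (v i.succ))
    (I : Finset α)
    (hIsub : ∀ x ∈ I, ∃ i : Fin (s + 2), 1 ≤ (i : ℕ) ∧ (i : ℕ) ≤ s ∧ v i = x)
    (hind : ∀ x ∈ I, ∀ y ∈ I, ¬ G.Adj x y)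
    (B : Finset (Fin (s + 1))) (hBcard : B.card = b)
    (hBavoid : ∀ i ∈ B, v i.castSucc ∉ I ∧ v i.succ ∉ I) :
    I.card ≤ (s - b + 1) / 2 := by
  classical
  set N := univ.filter fun i : Fin (s + 2) => 1 ≤ (i : ℕ) ∧ (i : ℕ) ≤ s ∧ v i ∈ I
  have hIN : #I ≤ #N :=
    calc #I ≤ #(N.image v) := card_le_card fun x hx => by
          obtain ⟨i, h1, h2, rfl⟩ := hIsub x hx
          exact mem_image_of_mem v (by simp [N, h1, h2, hx])
      _ ≤ #N := card_image_le
  have hcount : 2 * #N + #B ≤ s + 1 :=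
    two_mul_card_add_card_le_of_independent (by simp [N]) (by simp [N])
      (fun i hi hi' => by
        simp only [N, mem_filter] at hi hi'
        exact hind _ hi.2.2.2 _ hi'.2.2.2 (hadj i))
      (fun i hi => by simp [N, (hBavoid i hi).1, (hBavoid i hi).2])
  omega

/-- Lemma (path independent-set counting): if `Q = v_0, …, v_{s+1}` is a path in a
graph `G`, `I` is a nonempty independent set contained in `{v_1, …, v_s}`, and `B` is a
set of `b` edges of `Q` none of which is incident to a vertex of `I`, then
`|I| ≤ ⌈(s - b)/2⌉`. -/
theorem stmt_0 {α : Type*} [DecidableEq α] (G : SimpleGraph α) (s b : ℕ)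
    (hb : b ≤ s + 1)
    (v : Fin (s + 2) → α) (hinj : Function.Injective v)
    (hadj : ∀ i : Fin (s + 1), G.Adj (v i.castSucc) (v i.succ))
    (I : Finset α) (hne : I.Nonempty)
    (hIsub : ∀ x ∈ I, ∃ i : Fin (s + 2), 1 ≤ (i : ℕ) ∧ (i : ℕ) ≤ s ∧ v i = x)
    (hind : ∀ x ∈ I, ∀ y ∈ I, ¬ G.Adj x y)
    (B : Finset (Fin (s + 1))) (hBcard : B.card = b)
    (hBavoid : ∀ i ∈ B, v i.castSucc ∉ I ∧ v i.succ ∉ I) :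
    I.card ≤ (s - b + 1) / 2 :=
  stmt_0_general G s b v hadj I hIsub hind B hBcard hBavoid
end

section
/- Let Q = v_0, v_1, ..., v_{s+1} be a path, I a nonempty independent subset of {v_1, ..., v_s}, and B a set of b edges of Q with no edge of B incident to any vertex of I. If s - b is odd and |I| = ⌈(s-b)/2⌉, then for every index i with 1 ≤ i ≤ s, at least one of the following holds: v_i ∈ I, the edge {v_i, v_{i+1}} ∈ B, the edge {v_{i-1}, v_i} ∈ B, or both v_{i-1} ∈ I and v_{i+1} ∈ I. -/
/-- Equality case of the path independent-set counting lemma: if `s - b` is odd and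
`|I| = ⌈(s-b)/2⌉`, then for every `1 ≤ i ≤ s`, either `v_i ∈ I`, or `e_i ∈ B`, or
`e_{i-1} ∈ B`, or both `v_{i-1} ∈ I` and `v_{i+1} ∈ I`. -/
theorem stmt_1 {α : Type*} [DecidableEq α] (G : SimpleGraph α) (s b : ℕ)
    (hb : b ≤ s + 1)
    (v : Fin (s + 2) → α) (hinj : Function.Injective v)
    (hadj : ∀ i : Fin (s + 1), G.Adj (v i.castSucc) (v i.succ))
    (I : Finset α) (hne : I.Nonempty)
    (hIsub : ∀ x ∈ I, ∃ i : Fin (s + 2), 1 ≤ (i : ℕ) ∧ (i : ℕ) ≤ s ∧ v i = x)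
    (hind : ∀ x ∈ I, ∀ y ∈ I, ¬ G.Adj x y)
    (B : Finset (Fin (s + 1))) (hBcard : B.card = b)
    (hBavoid : ∀ i ∈ B, v i.castSucc ∉ I ∧ v i.succ ∉ I)
    (hodd : Odd (s - b)) (hcard : I.card = (s - b + 1) / 2) :
    ∀ i : ℕ, ∀ _h1 : 1 ≤ i, ∀ _h2 : i ≤ s,
      v ⟨i, by omega⟩ ∈ I ∨
      (⟨i, by omega⟩ : Fin (s + 1)) ∈ B ∨
      (⟨i - 1, by omega⟩ : Fin (s + 1)) ∈ B ∨
      (v ⟨i - 1, by omega⟩ ∈ I ∧ v ⟨i + 1, by omega⟩ ∈ I) := by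
  classical
  intro i h1 h2
  by_contra hcon
  push_neg at hcon
  obtain ⟨hvI, heB, heB', hfin⟩ := hcon
  -- b ≤ s since s - b is odd
  have hbs : b ≤ s := by
    by_contra h
    have : s - b = 0 := by omega
    rw [this] at hodd
    have := Nat.odd_iff.mp hodd
    omega
  obtain ⟨k, hk⟩ := hodd
  -- index set of I
  set SN : Finset ℕ :=
    (Finset.univ.filter (fun j : Fin (s+2) => v j ∈ I)).image Fin.val with hSNdef
  have memSN : ∀ n : ℕ, n ∈ SN ↔ ∃ j : Fin (s+2), v j ∈ I ∧ (j : ℕ) = n := by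
    intro n
    simp [hSNdef]
  have memSN' : ∀ n : ℕ, ∀ hn : n < s + 2, (n ∈ SN ↔ v ⟨n, hn⟩ ∈ I) := by
    intro n hn
    rw [memSN]
    constructor
    · rintro ⟨j, hj, rfl⟩
      have : (⟨(j : ℕ), hn⟩ : Fin (s+2)) = j := Fin.ext rfl
      rwa [this]
    · intro h
      exact ⟨⟨n, hn⟩, h, rfl⟩
  have hrange : ∀ n ∈ SN, 1 ≤ n ∧ n ≤ s := by
    intro n hn
    rw [memSN] at hn
    obtain ⟨j, hj, rfl⟩ := hn
    obtain ⟨j', h1', h2', hv'⟩ := hIsub _ hj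
    have := hinj hv'
    subst this
    exact ⟨h1', h2'⟩
  have hcons : ∀ n ∈ SN, n + 1 ∉ SN := by
    intro n hn hn1
    have hb1 := hrange n hn
    have hb2 := hrange (n+1) hn1
    have hlt : n < s + 2 := by omega
    have hlt1 : n + 1 < s + 2 := by omega
    have hv1 : v ⟨n, hlt⟩ ∈ I := (memSN' n hlt).mp hn
    have hv2 : v ⟨n+1, hlt1⟩ ∈ I := (memSN' (n+1) hlt1).mp hn1
    exact hind _ hv1 _ hv2 (hadj ⟨n, by omega⟩)
  -- cardinality of SN
  have himg : (Finset.univ.filter (fun j : Fin (s+2) => v j ∈ I)).image v = I := by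
    ext x
    simp only [Finset.mem_image, Finset.mem_filter, Finset.mem_univ, true_and]
    constructor
    · rintro ⟨j, hj, rfl⟩; exact hj
    · intro hx
      obtain ⟨j, _, _, hv'⟩ := hIsub _ hx
      exact ⟨j, hv' ▸ hx, hv'⟩
  have hSNcard : SN.card = I.card := by
    have h2 : I.card = (Finset.univ.filter (fun j : Fin (s+2) => v j ∈ I)).card := by
      conv_lhs => rw [← himg]
      rw [Finset.card_image_of_injective _ hinj]
    rw [hSNdef, Finset.card_image_of_injective _ Fin.val_injective, h2]
  -- edge-index set of B
  set BN : Finset ℕ := B.image Fin.val with hBNdef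
  have memBN : ∀ n : ℕ, n ∈ BN ↔ ∃ j ∈ B, (j : ℕ) = n := by
    intro n; simp [hBNdef]
  have hBNavoid : ∀ m ∈ BN, m ∉ SN ∧ m + 1 ∉ SN := by
    intro m hm
    rw [memBN] at hm
    obtain ⟨j, hj, rfl⟩ := hm
    obtain ⟨hA, hB'⟩ := hBavoid j hj
    constructor
    · intro hmem
      rw [memSN] at hmem
      obtain ⟨k', hk', hval⟩ := hmem
      have : j.castSucc = k' := Fin.ext (by simpa using hval.symm)
      exact hA (this ▸ hk')
    · intro hmem
      rw [memSN] at hmem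
      obtain ⟨k', hk', hval⟩ := hmem
      have : j.succ = k' := Fin.ext (by simpa using hval.symm)
      exact hB' (this ▸ hk')
  -- the edge cover
  set E : Finset ℕ := SN.biUnion (fun n => ({n - 1, n} : Finset ℕ)) with hEdef
  have hdisj : ∀ n ∈ SN, ∀ m ∈ SN, n ≠ m →
      Disjoint ({n - 1, n} : Finset ℕ) ({m - 1, m} : Finset ℕ) := by
    intro n hn m hm hnm
    have h1 := hrange n hn
    have h2 := hrange m hm
    have h3 : n + 1 ≠ m := fun h => hcons n hn (h ▸ hm)
    have h4 : m + 1 ≠ n := fun h => hcons m hm (h ▸ hn)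
    rw [Finset.disjoint_left]
    intro a ha ha'
    simp only [Finset.mem_insert, Finset.mem_singleton] at ha ha'
    omega
  have hEcard : E.card = 2 * SN.card := by
    rw [hEdef, Finset.card_biUnion hdisj]
    rw [Finset.sum_congr rfl (fun n hn => ?_), Finset.sum_const, smul_eq_mul,
      Nat.mul_comm]
    have h1 := hrange n hn
    exact Finset.card_pair (by omega)
  have hEsub : E ⊆ Finset.range (s+1) \ BN := by
    intro a ha
    rw [hEdef, Finset.mem_biUnion] at ha
    obtain ⟨n, hn, ha⟩ := ha
    have h1 := hrange n hn
    simp only [Finset.mem_insert, Finset.mem_singleton] at ha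
    rw [Finset.mem_sdiff, Finset.mem_range]
    constructor
    · omega
    · intro haB
      obtain ⟨hA, hB'⟩ := hBNavoid a haB
      rcases ha with rfl | rfl
      · exact hB' (by rwa [Nat.sub_add_cancel h1.1])
      · exact hA hn
  have hBNcard : BN.card = b := by
    rw [hBNdef, Finset.card_image_of_injective _ Fin.val_injective, hBcard]
  have hBNsub : BN ⊆ Finset.range (s+1) := by
    intro a ha
    rw [memBN] at ha
    obtain ⟨j, _, rfl⟩ := ha
    exact Finset.mem_range.mpr j.isLt
  have hsd : (Finset.range (s+1) \ BN).card = s + 1 - b := by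
    rw [Finset.card_sdiff_of_subset hBNsub, Finset.card_range, hBNcard]
  have hEq : E = Finset.range (s+1) \ BN := by
    apply Finset.eq_of_subset_of_card_le hEsub
    rw [hsd, hEcard, hSNcard, hcard]
    omega
  -- conclude
  have hiBN : i ∉ BN := by
    intro h
    rw [memBN] at h
    obtain ⟨j, hj, hval⟩ := h
    exact heB ((Fin.ext hval : j = ⟨i, by omega⟩) ▸ hj)
  have hiBN' : i - 1 ∉ BN := by
    intro h
    rw [memBN] at h
    obtain ⟨j, hj, hval⟩ := h
    exact heB' ((Fin.ext hval : j = ⟨i - 1, by omega⟩) ▸ hj)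
  have hiSN : i ∉ SN := fun h => hvI ((memSN' i (by omega)).mp h)
  have hiE : i ∈ E := by
    rw [hEq, Finset.mem_sdiff, Finset.mem_range]
    exact ⟨by omega, hiBN⟩
  have hiE' : i - 1 ∈ E := by
    rw [hEq, Finset.mem_sdiff, Finset.mem_range]
    exact ⟨by omega, hiBN'⟩
  rw [hEdef, Finset.mem_biUnion] at hiE hiE'
  obtain ⟨n, hn, hin⟩ := hiE
  obtain ⟨m, hm, him⟩ := hiE'
  simp only [Finset.mem_insert, Finset.mem_singleton] at hin him
  have hn1 := hrange n hn
  have hm1 := hrange m hm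
  have hni : n = i + 1 := by
    rcases hin with h | h
    · omega
    · exact absurd (h ▸ hn) hiSN
  have hmi : m = i - 1 := by
    rcases him with h | h
    · have hmi2 : m = i := by omega
      subst hmi2
      exact absurd hm hiSN
    · omega
  subst hni; subst hmi
  exact hfin ((memSN' (i-1) (by omega)).mp hm) ((memSN' (i+1) (by omega)).mp hn)
end

section
/- Let r ≥ 3 and s ≥ 2. The r-uniform hypergraph H_3(r,s) with vertex set {v_1, v_2} ∪ U_1 ∪ ... ∪ U_s (the U_i pairwise disjoint, each of size r-1) and edges e_{i,j} = U_i ∪ {v_j} for 1 ≤ i ≤ s and j ∈ {1,2} is 2-connected but contains no Berge cycle of length greater than 4. -/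
def incGraph {α : Type*} (H : Finset (Finset α)) :
    SimpleGraph (α ⊕ {e : Finset α // e ∈ H}) where
  Adj x y :=
    match x, y with
    | Sum.inl a, Sum.inr e => a ∈ e.1
    | Sum.inr e, Sum.inl a => a ∈ e.1
    | _, _ => False
  symm := ⟨by rintro (a | e) (b | f) h <;> exact h⟩
  loopless := ⟨by rintro (a | e) h <;> exact h⟩

/-- A hypergraph is 2-connected if its incidence bipartite graph is 2-connected. -/
def TwoConnected {V : Type*} (G : SimpleGraph V) : Prop :=
  3 ≤ Nat.card V ∧ ∀ v : V, (G.induce {w | w ≠ v}).Connected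

def IsBergeCycle {α : Type*} (H : Finset (Finset α)) (c : ℕ)
    (v : ZMod c → α) (e : ZMod c → Finset α) : Prop :=
  Function.Injective v ∧ Function.Injective e ∧
    ∀ i : ZMod c, e i ∈ H ∧ v i ∈ e i ∧ v (i + 1) ∈ e i

def HasBergeCycle {α : Type*} (H : Finset (Finset α)) (c : ℕ) : Prop :=
  ∃ v e, IsBergeCycle H c v e

/-- The `r`-uniform hypergraph `H_3(r,s)` with vertex set `{v_1,v_2} ∪ U_1 ∪ … ∪ U_s`
(`|U_i| = r-1`) and edges `e_{i,j} = U_i ∪ {v_j}`. -/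
def H3 (r s : ℕ) : Finset (Finset (Fin 2 ⊕ Fin s × Fin (r - 1))) :=
  Finset.image (fun p : Fin s × Fin 2 =>
    insert (Sum.inl p.2)
      (Finset.univ.image (fun a : Fin (r - 1) => Sum.inr (p.1, a))))
    Finset.univ

/-!
Removing any node of the incidence graph leaves every remaining node joined to a hub
(`v_2` if `v_1` was removed, `v_1` otherwise) by an explicit path of length at most four.

For a Berge cycle `(v_i, f_i)`, call `i` a switch when `f_i` and `f_{i+1}` lie over different
blocks `U`. Then `v_{i+1} ∈ f_i ∩ f_{i+1} ⊆ {v_1, v_2}`, so by injectivity there are at most two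
switches; and since each block carries only two edges, of any two consecutive indices one is a
switch. Hence the cycle has length at most `4`.
-/

open Finset Function

namespace SimpleGraph

variable {V : Type*} {G : SimpleGraph V} {w x y z : V}

def ReachableAvoiding (G : SimpleGraph V) (w x y : V) : Prop :=
  ∃ p : G.Walk x y, w ∉ p.support

lemma ReachableAvoiding.refl (hx : x ≠ w) : G.ReachableAvoiding w x x :=
  ⟨.nil, by simpa using hx.symm⟩

lemma Adj.reachableAvoiding (h : G.Adj x y) (hx : x ≠ w) (hy : y ≠ w) :
    G.ReachableAvoiding w x y :=
  ⟨h.toWalk, by simp [hx.symm, hy.symm]⟩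

lemma ReachableAvoiding.symm (h : G.ReachableAvoiding w x y) : G.ReachableAvoiding w y x :=
  let ⟨p, hp⟩ := h
  ⟨p.reverse, by simpa using hp⟩

lemma ReachableAvoiding.trans (hxy : G.ReachableAvoiding w x y)
    (hyz : G.ReachableAvoiding w y z) : G.ReachableAvoiding w x z :=
  let ⟨p, hp⟩ := hxy
  let ⟨q, hq⟩ := hyz
  ⟨p.append q, by
    rw [Walk.support_append, List.mem_append, not_or]
    exact ⟨hp, fun h => hq (List.mem_of_mem_tail h)⟩⟩

lemma connected_induce_ne_of_reachableAvoiding (hy : y ≠ w)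
    (h : ∀ x, x ≠ w → G.ReachableAvoiding w x y) : (G.induce {x | x ≠ w}).Connected := by
  refine G.induce_connected_of_patches y hy fun {x} hx => ?_
  obtain ⟨p, hp⟩ := (h x hx).symm
  refine ⟨{z | z ∈ p.support}, fun z hz => ?_, p.start_mem_support, p.end_mem_support,
    p.connected_induce_support.preconnected _ _⟩
  rintro rfl
  exact hp hz

end SimpleGraph

lemma Fintype.card_le_two_mul_card_of_mapsTo_compl {α : Type*} [Fintype α] [DecidableEq α]
    {S : Finset α} {f : α → α} (hf : Injective f) (hS : ∀ x ∉ S, f x ∈ S) :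
    Fintype.card α ≤ 2 * #S := by
  have hSc : #Sᶜ ≤ #S :=
    card_le_card_of_injOn f (fun x hx => hS x (mem_compl.mp hx)) hf.injOn
  have := card_add_card_compl S
  omega

lemma Fin.rev_ne_self_of_two (j : Fin 2) : j.rev ≠ j := by
  fin_cases j <;> decide

lemma Fin.eq_rev_of_ne_of_two {j j₀ : Fin 2} (h : j ≠ j₀) : j = j₀.rev := by
  fin_cases j <;> fin_cases j₀ <;> simp_all

lemma ZMod.add_natCast_ne_self {n k : ℕ} (i : ZMod n) (hk : 0 < k) (hkn : k < n) :
    i + k ≠ i := by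
  rw [Ne, add_eq_left, ZMod.natCast_eq_zero_iff]
  exact fun h => absurd (Nat.le_of_dvd hk h) (by omega)

namespace H3

variable {r s : ℕ}

def edge (r s : ℕ) (i : Fin s) (j : Fin 2) : Finset (Fin 2 ⊕ Fin s × Fin (r - 1)) :=
  insert (.inl j) (univ.image fun a => .inr (i, a))

lemma edge_mem (i : Fin s) (j : Fin 2) : edge r s i j ∈ H3 r s :=
  mem_image_of_mem _ (mem_univ (i, j))

lemma exists_eq_edge {f : Finset (Fin 2 ⊕ Fin s × Fin (r - 1))} (hf : f ∈ H3 r s) :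
    ∃ i j, f = edge r s i j := by
  obtain ⟨⟨i, j⟩, -, rfl⟩ := mem_image.mp hf
  exact ⟨i, j, rfl⟩

@[simp]
lemma mem_edge {x : Fin 2 ⊕ Fin s × Fin (r - 1)} {i : Fin s} {j : Fin 2} :
    x ∈ edge r s i j ↔ x = .inl j ∨ ∃ a, x = .inr (i, a) := by
  simp [edge, eq_comm]

lemma eq_inl_of_mem_edge {x : Fin 2 ⊕ Fin s × Fin (r - 1)} {i i' : Fin s} {j j' : Fin 2}
    (hx : x ∈ edge r s i j) (hx' : x ∈ edge r s i' j') (hi : i ≠ i') : x = .inl j := by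
  rw [mem_edge] at hx hx'
  rcases hx with hx | ⟨a, rfl⟩
  · exact hx
  · simp [hi] at hx'

lemma edge_inj (hr : 2 ≤ r) {i i' : Fin s} {j j' : Fin 2} :
    edge r s i j = edge r s i' j' ↔ i = i' ∧ j = j' := by
  refine ⟨fun h => ⟨?_, ?_⟩, fun ⟨hi, hj⟩ => hi ▸ hj ▸ rfl⟩
  · have hmem : (.inr (i, ⟨0, by omega⟩) : Fin 2 ⊕ Fin s × Fin (r - 1)) ∈ edge r s i' j' :=
      h ▸ mem_edge.mpr (.inr ⟨_, rfl⟩)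
    simpa using hmem
  · have hmem : (.inl j : Fin 2 ⊕ Fin s × Fin (r - 1)) ∈ edge r s i' j' :=
      h ▸ mem_edge.mpr (.inl rfl)
    simpa using hmem

abbrev Node (r s : ℕ) := (Fin 2 ⊕ Fin s × Fin (r - 1)) ⊕ {e // e ∈ H3 r s}

/-- `nodeV j` is `v_j`, `nodeU i a` is the `a`-th vertex of `U_i`, and `nodeE i j` is the
edge `e_{i,j}`, as nodes of the incidence graph. -/
abbrev nodeV (r s : ℕ) (j : Fin 2) : Node r s := .inl (.inl j)

abbrev nodeU (r s : ℕ) (i : Fin s) (a : Fin (r - 1)) : Node r s := .inl (.inr (i, a))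

abbrev nodeE (r s : ℕ) (i : Fin s) (j : Fin 2) : Node r s := .inr ⟨edge r s i j, edge_mem i j⟩

@[elab_as_elim]
lemma node_induction {P : Node r s → Prop} (hV : ∀ j, P (nodeV r s j))
    (hU : ∀ i a, P (nodeU r s i a)) (hE : ∀ i j, P (nodeE r s i j)) (x : Node r s) : P x := by
  rcases x with (j | ⟨i, a⟩) | ⟨f, hf⟩
  · exact hV j
  · exact hU i a
  · obtain ⟨i, j, rfl⟩ := exists_eq_edge hf
    exact hE i j

lemma adj_nodeV_nodeE (i : Fin s) (j : Fin 2) :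
    (incGraph (H3 r s)).Adj (nodeV r s j) (nodeE r s i j) :=
  mem_edge.mpr (.inl rfl)

lemma adj_nodeU_nodeE (i : Fin s) (a : Fin (r - 1)) (j : Fin 2) :
    (incGraph (H3 r s)).Adj (nodeU r s i a) (nodeE r s i j) :=
  mem_edge.mpr (.inr ⟨a, rfl⟩)

lemma three_le_card_node (hr : 2 ≤ r) (hs : 1 ≤ s) : 3 ≤ Nat.card (Node r s) := by
  have : 1 ≤ s * (r - 1) := Nat.mul_le_mul hs (by omega : 1 ≤ r - 1)
  simp only [Nat.card_eq_fintype_card, Fintype.card_sum, Fintype.card_prod, Fintype.card_fin]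
  omega

open SimpleGraph

local notation "𝓖" => incGraph (H3 r s)

lemma reachableAvoiding_of_ne_nodeV (hr : 2 ≤ r) {j₀ : Fin 2} {x : Node r s}
    (hx : x ≠ nodeV r s j₀) :
    ReachableAvoiding 𝓖 (nodeV r s j₀) x (nodeV r s j₀.rev) := by
  have hrev := j₀.rev_ne_self_of_two
  have hU (i : Fin s) (a : Fin (r - 1)) :
      ReachableAvoiding 𝓖 (nodeV r s j₀) (nodeU r s i a) (nodeV r s j₀.rev) :=
    ((adj_nodeU_nodeE i a j₀.rev).reachableAvoiding (by simp) (by simp)).trans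
      ((adj_nodeV_nodeE i j₀.rev).symm.reachableAvoiding (by simp) (by simp [hrev]))
  induction x using node_induction with
  | hV j =>
    obtain rfl := Fin.eq_rev_of_ne_of_two (by simpa using hx)
    exact .refl (by simp [hrev])
  | hU i a => exact hU i a
  | hE i j =>
    exact ((adj_nodeU_nodeE i ⟨0, by omega⟩ j).symm.reachableAvoiding hx (by simp)).trans
      (hU i _)

lemma reachableAvoiding_of_ne_nodeU (hr : 3 ≤ r) {i₀ : Fin s} {a₀ : Fin (r - 1)}
    {x : Node r s} (hx : x ≠ nodeU r s i₀ a₀) :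
    ReachableAvoiding 𝓖 (nodeU r s i₀ a₀) x (nodeV r s 0) := by
  have : Nontrivial (Fin (r - 1)) := Fin.nontrivial_iff_two_le.mpr (by omega)
  obtain ⟨a₁, ha₁⟩ := exists_ne a₀
  have hE (i : Fin s) (j : Fin 2) :
      ReachableAvoiding 𝓖 (nodeU r s i₀ a₀) (nodeE r s i j) (nodeV r s 0) :=
    (((adj_nodeU_nodeE i a₁ j).symm.reachableAvoiding (by simp) (by simp [ha₁])).trans
      ((adj_nodeU_nodeE i a₁ 0).reachableAvoiding (by simp [ha₁]) (by simp))).trans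
      ((adj_nodeV_nodeE i 0).symm.reachableAvoiding (by simp) (by simp))
  induction x using node_induction with
  | hV j => exact ((adj_nodeV_nodeE i₀ j).reachableAvoiding hx (by simp)).trans (hE i₀ j)
  | hU i a => exact ((adj_nodeU_nodeE i a 0).reachableAvoiding hx (by simp)).trans (hE i 0)
  | hE i j => exact hE i j

lemma reachableAvoiding_of_ne_nodeE (hr : 2 ≤ r) (hs : 2 ≤ s) {i₀ : Fin s} {j₀ : Fin 2}
    {x : Node r s} (hx : x ≠ nodeE r s i₀ j₀) :
    ReachableAvoiding 𝓖 (nodeE r s i₀ j₀) x (nodeV r s 0) := by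
  have : Nontrivial (Fin s) := Fin.nontrivial_iff_two_le.mpr hs
  obtain ⟨i₁, hi₁⟩ := exists_ne i₀
  have hrev := j₀.rev_ne_self_of_two
  have hne (j : Fin 2) : nodeE r s i₁ j ≠ nodeE r s i₀ j₀ := by simp [edge_inj hr, hi₁]
  have hne' (i : Fin s) : nodeE r s i j₀.rev ≠ nodeE r s i₀ j₀ := by simp [edge_inj hr, hrev]
  let a₀ : Fin (r - 1) := ⟨0, by omega⟩
  have hE (j : Fin 2) : ReachableAvoiding 𝓖 (nodeE r s i₀ j₀) (nodeE r s i₁ j) (nodeV r s 0) :=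
    (((adj_nodeU_nodeE i₁ a₀ j).symm.reachableAvoiding (hne j) (by simp)).trans
      ((adj_nodeU_nodeE i₁ a₀ 0).reachableAvoiding (by simp) (hne 0))).trans
      ((adj_nodeV_nodeE i₁ 0).symm.reachableAvoiding (hne 0) (by simp))
  have hV (j : Fin 2) : ReachableAvoiding 𝓖 (nodeE r s i₀ j₀) (nodeV r s j) (nodeV r s 0) :=
    ((adj_nodeV_nodeE i₁ j).reachableAvoiding (by simp) (hne j)).trans (hE j)
  induction x using node_induction with
  | hV j => exact hV j
  | hU i a =>
    exact ((adj_nodeU_nodeE i a j₀.rev).reachableAvoiding hx (hne' i)).trans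
      (((adj_nodeV_nodeE i j₀.rev).symm.reachableAvoiding (hne' i) (by simp)).trans (hV _))
  | hE i j => exact ((adj_nodeV_nodeE i j).symm.reachableAvoiding hx (by simp)).trans (hV j)

lemma connected_induce_ne (hr : 3 ≤ r) (hs : 2 ≤ s) (w : Node r s) :
    ((incGraph (H3 r s)).induce {x | x ≠ w}).Connected := by
  induction w using node_induction with
  | hV j₀ =>
    exact connected_induce_ne_of_reachableAvoiding (by simpa using j₀.rev_ne_self_of_two)
      fun x hx => reachableAvoiding_of_ne_nodeV (by omega) hx
  | hU i₀ a₀ =>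
    exact connected_induce_ne_of_reachableAvoiding (by simp)
      fun x hx => reachableAvoiding_of_ne_nodeU hr hx
  | hE i₀ j₀ =>
    exact connected_induce_ne_of_reachableAvoiding (by simp)
      fun x hx => reachableAvoiding_of_ne_nodeE (by omega) hs hx

theorem not_hasBergeCycle (r s : ℕ) {ℓ : ℕ} (hℓ : 4 < ℓ) : ¬ HasBergeCycle (H3 r s) ℓ := by
  rintro ⟨v, e, hv, he, hcyc⟩
  have : NeZero ℓ := ⟨by omega⟩
  choose u j hej using fun i => exists_eq_edge (hcyc i).1
  have hidx : Injective fun i => (u i, j i) := fun a b hab => he <| by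
    simp only [Prod.mk.injEq] at hab
    rw [hej a, hej b, hab.1, hab.2]
  have hsucc (k : ZMod ℓ) : k + 1 ≠ k := by
    simpa using ZMod.add_natCast_ne_self k one_pos (by omega)
  have hsucc₂ (k : ZMod ℓ) : k + 1 + 1 ≠ k := by
    simpa [add_assoc, one_add_one_eq_two] using ZMod.add_natCast_ne_self k two_pos (by omega)
  classical
  let S := univ.filter fun i => u i ≠ u (i + 1)
  -- Where the cycle leaves a block `U_i`, the next vertex is `v_1` or `v_2`.
  have hS : #S ≤ 2 := by
    have hvS : ∀ i ∈ S, v (i + 1) = .inl (j i) := fun i hi =>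
      eq_inl_of_mem_edge (hej i ▸ (hcyc i).2.2) (hej (i + 1) ▸ (hcyc (i + 1)).2.1)
        (mem_filter.mp hi).2
    calc #S ≤ #(univ : Finset (Fin 2)) :=
          card_le_card_of_injOn j (fun _ _ => mem_univ _) fun a ha b hb hab =>
            add_right_cancel (hv (by rw [hvS a ha, hvS b hb, hab]))
      _ = 2 := by simp
  -- Each block carries only two edges, so the cycle cannot stay in it for three steps.
  have hSc : ∀ i ∉ S, i + 1 ∈ S := by
    intro i hi
    simp only [S, mem_filter, mem_univ, true_and, not_not] at hi ⊢
    intro hi'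
    have hj₁ : j i ≠ j (i + 1) := fun h => hsucc i (hidx (Prod.ext hi h)).symm
    have hj₂ : j (i + 1 + 1) ≠ j (i + 1) := fun h => hsucc (i + 1) (hidx (Prod.ext hi'.symm h))
    have hj : j i = j (i + 1 + 1) :=
      (Fin.eq_rev_of_ne_of_two hj₁).trans (Fin.eq_rev_of_ne_of_two hj₂).symm
    exact hsucc₂ i (hidx (Prod.ext (hi.trans hi') hj)).symm
  have := Fintype.card_le_two_mul_card_of_mapsTo_compl (add_left_injective 1) hSc
  rw [ZMod.card] at this
  omega

end H3

/-- For `r ≥ 3`, `s ≥ 2`, the hypergraph `H_3(r,s)` is 2-connected but has no Berge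
cycle of length greater than `4`. -/
theorem stmt_5 (r s : ℕ) (hr : 3 ≤ r) (hs : 2 ≤ s) :
    TwoConnected (incGraph (H3 r s)) ∧
    ∀ ℓ : ℕ, 4 < ℓ → ¬ HasBergeCycle (H3 r s) ℓ :=
  ⟨⟨H3.three_le_card_node (by omega) (by omega), H3.connected_induce_ne hr hs⟩,
    fun _ hℓ => H3.not_hasBergeCycle r s hℓ⟩
end

section
/- For large n and r ≥ 3 dividing n, the r-uniform hypergraph obtained by taking r vertex-disjoint complete r-uniform hypergraphs each on n/r vertices, together with one additional edge intersecting each clique in exactly one vertex, is connected, has minimum degree at least C(n/r - 1, r-1), but contains two vertices u, v such that the only Berge u,v-path between them has exactly one edge. -/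
def IsBergePath {α : Type*} (H : Finset (Finset α)) (ℓ : ℕ)
    (w : Fin (ℓ + 1) → α) (f : Fin ℓ → Finset α) : Prop :=
  Function.Injective w ∧ Function.Injective f ∧
    ∀ i : Fin ℓ, f i ∈ H ∧ w i.castSucc ∈ f i ∧ w i.succ ∈ f i

def HasBergePath {α : Type*} (H : Finset (Finset α)) (ℓ : ℕ) (u v : α) : Prop :=
  ∃ w f, IsBergePath H ℓ w f ∧ w 0 = u ∧ w (Fin.last ℓ) = v

/-- The `r`-uniform hypergraph on `n = r(m+1)` vertices consisting of `r` disjoint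
complete `r`-uniform hypergraphs, each on `n/r = m+1` vertices (the columns
`{i} × Fin (m+1)`), together with one extra edge meeting each clique in exactly one
vertex (the vertices `(i, 0)`). -/
def cliqueH (r m : ℕ) : Finset (Finset (Fin r × Fin (m + 1))) :=
  insert (Finset.univ.image (fun i : Fin r => (i, (0 : Fin (m + 1)))))
    (Finset.univ.filter (fun e : Finset (Fin r × Fin (m + 1)) =>
      e.card = r ∧ ∃ i : Fin r, ∀ x ∈ e, x.1 = i))

/-!
Every edge other than the transversal edge `T = {(i, 0)}` lies inside a single clique, so along a
Berge path the clique index changes only at the (unique) step that uses `T`. A path from `(0, 0)`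
to `(1, 0)` must therefore use `T`, entering it at a vertex of clique `0` and leaving it at a
vertex of clique `1`; as `T` meets each clique only once, these are the endpoints themselves, and
injectivity of the vertex sequence forces the path to have length one.
-/

open Finset

section BergePath

variable {α β : Type*} {H : Finset (Finset α)}

theorem hasBergePath_one_of_mem {e : Finset α} (he : e ∈ H) {u v : α} (hu : u ∈ e) (hv : v ∈ e)
    (huv : u ≠ v) : HasBergePath H 1 u v := by
  refine ⟨![u, v], ![e], ⟨?_, Function.injective_of_subsingleton _, ?_⟩, rfl, rfl⟩
  · intro a b hab
    fin_cases a <;> fin_cases b <;> simp_all [eq_comm]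
  · intro i
    fin_cases i
    exact ⟨he, hu, hv⟩

theorem Fin.apply_eq_apply_zero_of_forall_le {n : ℕ} {g : Fin (n + 1) → β} {j : Fin (n + 1)}
    (h : ∀ i : Fin n, i.succ ≤ j → g i.castSucc = g i.succ) : g j = g 0 := by
  induction j using Fin.induction with
  | zero => rfl
  | succ i ih =>
    rw [← h i le_rfl]
    exact ih fun k hk => h k (hk.trans (Fin.castSucc_le_succ i))

theorem Fin.apply_eq_apply_last_of_forall_le {n : ℕ} {g : Fin (n + 1) → β} {j : Fin (n + 1)}
    (h : ∀ i : Fin n, j ≤ i.castSucc → g i.castSucc = g i.succ) : g j = g (Fin.last n) := by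
  induction j using Fin.reverseInduction with
  | last => rfl
  | cast i ih =>
    rw [h i le_rfl]
    exact ih fun k hk => h k ((Fin.castSucc_le_succ i).trans hk)

theorem HasBergePath.eq_one_of_separating_edge {e : Finset α} (c : α → β)
    (hc : ∀ g ∈ H, g ≠ e → ∀ x ∈ g, ∀ y ∈ g, c x = c y) (he : Set.InjOn c e) {u v : α}
    (hu : u ∈ e) (hv : v ∈ e) (huv : c u ≠ c v) {ℓ : ℕ} (h : HasBergePath H ℓ u v) : ℓ = 1 := by
  obtain ⟨w, f, ⟨hw, hf, hedge⟩, rfl, rfl⟩ := h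
  have hstep : ∀ i, f i ≠ e → c (w i.castSucc) = c (w i.succ) := fun i hi =>
    hc _ (hedge i).1 hi _ (hedge i).2.1 _ (hedge i).2.2
  obtain ⟨k, hk⟩ : ∃ k, f k = e := by
    by_contra! hno
    exact huv (Fin.apply_eq_apply_zero_of_forall_le (g := c ∘ w) fun i _ => hstep i (hno i)).symm
  have hne : ∀ i, i ≠ k → f i ≠ e := fun i hik hi => hik (hf (hi.trans hk.symm))
  have hstart : w k.castSucc = w 0 := he (hk ▸ (hedge k).2.1) hu <|
    Fin.apply_eq_apply_zero_of_forall_le (g := c ∘ w) fun i hi =>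
      hstep i (hne i (Fin.succ_le_castSucc_iff.1 hi).ne)
  have hend : w k.succ = w (Fin.last ℓ) := he (hk ▸ (hedge k).2.2) hv <|
    Fin.apply_eq_apply_last_of_forall_le (g := c ∘ w) fun i hi =>
      hstep i (hne i (Fin.succ_le_castSucc_iff.1 hi).ne')
  have h0 := congrArg Fin.val (hw hstart)
  have h1 := congrArg Fin.val (hw hend)
  simp only [Fin.val_castSucc, Fin.val_zero, Fin.val_succ, Fin.val_last] at h0 h1
  omega

end BergePath

section IncGraph

variable {α : Type*} {H : Finset (Finset α)}

theorem incGraph_adj_inl_inr {x : α} {e : {e : Finset α // e ∈ H}} :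
    (incGraph H).Adj (.inl x) (.inr e) ↔ x ∈ e.1 := Iff.rfl

theorem incGraph_reachable_of_mem {e : Finset α} (he : e ∈ H) {x y : α} (hx : x ∈ e)
    (hy : y ∈ e) : (incGraph H).Reachable (.inl x) (.inl y) :=
  (incGraph_adj_inl_inr.2 hx).reachable.trans
    (incGraph_adj_inl_inr (e := ⟨e, he⟩).2 hy).reachable.symm

theorem incGraph_connected (hH : ∀ e ∈ H, e.Nonempty) (x₀ : α)
    (h : ∀ x, (incGraph H).Reachable (.inl x) (.inl x₀)) : (incGraph H).Connected := by
  have hreach : ∀ a, (incGraph H).Reachable a (.inl x₀) := by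
    rintro (x | ⟨e, he⟩)
    · exact h x
    · obtain ⟨x, hx⟩ := hH e he
      exact (incGraph_adj_inl_inr (e := ⟨e, he⟩).2 hx).reachable.symm.trans (h x)
  have : Nonempty (α ⊕ {e : Finset α // e ∈ H}) := ⟨.inl x₀⟩
  exact ⟨fun a b => (hreach a).trans (hreach b).symm⟩

end IncGraph

section CliqueH

variable {r m : ℕ}

def transversal (r m : ℕ) : Finset (Fin r × Fin (m + 1)) :=
  Finset.univ.image (fun i : Fin r => (i, (0 : Fin (m + 1))))

def column (i : Fin r) (T : Finset (Fin (m + 1))) : Finset (Fin r × Fin (m + 1)) :=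
  T.map (Function.Embedding.sectR i _)

theorem mem_transversal {x : Fin r × Fin (m + 1)} : x ∈ transversal r m ↔ x.2 = 0 := by
  simp [transversal, Prod.ext_iff, eq_comm]

theorem mem_column {i : Fin r} {T : Finset (Fin (m + 1))} {x : Fin r × Fin (m + 1)} :
    x ∈ column i T ↔ x.1 = i ∧ x.2 ∈ T := by
  obtain ⟨x₁, x₂⟩ := x
  simp [column, eq_comm, and_comm]

theorem transversal_mem_cliqueH : transversal r m ∈ cliqueH r m := mem_insert_self _ _

theorem injOn_fst_transversal : Set.InjOn Prod.fst (transversal r m : Set (Fin r × Fin (m + 1))) :=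
  fun _ hx _ hy hxy => Prod.ext hxy ((mem_transversal.1 hx).trans (mem_transversal.1 hy).symm)

theorem column_mem_cliqueH (i : Fin r) {T : Finset (Fin (m + 1))} (hT : #T = r) :
    column i T ∈ cliqueH r m :=
  mem_insert_of_mem <| mem_filter.2
    ⟨mem_univ _, by rw [column, card_map, hT], i, fun _ hx => (mem_column.1 hx).1⟩

theorem fst_eq_of_mem_cliqueH {e : Finset (Fin r × Fin (m + 1))} (he : e ∈ cliqueH r m)
    (hne : e ≠ transversal r m) {x y : Fin r × Fin (m + 1)} (hx : x ∈ e) (hy : y ∈ e) :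
    x.1 = y.1 := by
  obtain ⟨-, -, i, hi⟩ := mem_filter.1 ((mem_insert.1 he).resolve_left hne)
  rw [hi x hx, hi y hy]

theorem cliqueH_edge_nonempty (hr : 1 ≤ r) {e : Finset (Fin r × Fin (m + 1))}
    (he : e ∈ cliqueH r m) : e.Nonempty := by
  rcases mem_insert.1 he with rfl | he
  · exact ⟨(⟨0, hr⟩, 0), mem_transversal.2 rfl⟩
  · rw [← card_pos, (mem_filter.1 he).2.1]
    exact hr

theorem incGraph_cliqueH_connected (hr : 2 ≤ r) (hm : r ≤ m + 1) :
    (incGraph (cliqueH r m)).Connected := by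
  refine incGraph_connected (fun _ => cliqueH_edge_nonempty (by omega)) (⟨0, by omega⟩, 0)
    fun x => ?_
  obtain ⟨T, hsub, -, hT⟩ := exists_subsuperset_card_eq (subset_univ {0, x.2})
    ((card_le_two).trans hr) (by simpa using hm)
  have hcol : (incGraph (cliqueH r m)).Reachable (.inl x) (.inl (x.1, 0)) :=
    incGraph_reachable_of_mem (column_mem_cliqueH x.1 hT) (mem_column.2 ⟨rfl, hsub (by simp)⟩)
      (mem_column.2 ⟨rfl, hsub (by simp)⟩)
  exact hcol.trans (incGraph_reachable_of_mem transversal_mem_cliqueH (mem_transversal.2 rfl)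
    (mem_transversal.2 rfl))

theorem choose_le_card_cliqueH_filter_mem (hr : 1 ≤ r) (x : Fin r × Fin (m + 1)) :
    m.choose (r - 1) ≤ ((cliqueH r m).filter (fun e => x ∈ e)).card := by
  calc m.choose (r - 1) = #((univ.erase x.2).powersetCard (r - 1)) := by simp
    _ ≤ _ := by
      refine card_le_card_of_injOn (fun S => column x.1 (insert x.2 S)) (fun S hS => ?_)
        fun S hS S' hS' hSS' => ?_
      · obtain ⟨hsub, hcard⟩ := mem_powersetCard.1 hS
        have hx : x.2 ∉ S := fun h => (mem_erase.1 (hsub h)).1 rfl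
        refine mem_filter.2 ⟨column_mem_cliqueH _ ?_, mem_column.2 ⟨rfl, mem_insert_self _ _⟩⟩
        rw [card_insert_of_notMem hx, hcard]
        omega
      · have hx : x.2 ∉ S := fun h => (mem_erase.1 ((mem_powersetCard.1 hS).1 h)).1 rfl
        have hx' : x.2 ∉ S' := fun h => (mem_erase.1 ((mem_powersetCard.1 hS').1 h)).1 rfl
        rw [← erase_insert hx, ← erase_insert hx', map_injective _ hSS']

end CliqueH

/-- For `r ≥ 3` and `n/r` large (here `n/r = m+1 ≥ r+1`), the above hypergraph is
connected, has minimum degree at least `C(n/r - 1, r-1)`, but contains two vertices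
`u ≠ v` joined by a Berge path of exactly one edge, such that every Berge `u,v`-path
has exactly one edge. -/
theorem stmt_15 (r m : ℕ) (hr : 3 ≤ r) (hm : r ≤ m) :
    (incGraph (cliqueH r m)).Connected ∧
    (∀ x : Fin r × Fin (m + 1),
      m.choose (r - 1) ≤ ((cliqueH r m).filter (fun e => x ∈ e)).card) ∧
    ∃ u v : Fin r × Fin (m + 1), u ≠ v ∧ HasBergePath (cliqueH r m) 1 u v ∧
      ∀ ℓ : ℕ, HasBergePath (cliqueH r m) ℓ u v → ℓ = 1 := by
  have hu : ((⟨0, by omega⟩, 0) : Fin r × Fin (m + 1)) ∈ transversal r m :=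
    mem_transversal.2 rfl
  have hv : ((⟨1, by omega⟩, 0) : Fin r × Fin (m + 1)) ∈ transversal r m :=
    mem_transversal.2 rfl
  have huv : (⟨0, by omega⟩ : Fin r) ≠ ⟨1, by omega⟩ := by simp
  refine ⟨incGraph_cliqueH_connected (by omega) (by omega),
    choose_le_card_cliqueH_filter_mem (by omega), _, _, fun h => huv (congrArg Prod.fst h),
    hasBergePath_one_of_mem transversal_mem_cliqueH hu hv fun h => huv (congrArg Prod.fst h),
    fun ℓ => HasBergePath.eq_one_of_separating_edge Prod.fst
      (fun _ he hne _ hx _ hy => fst_eq_of_mem_cliqueH he hne hx hy) injOn_fst_transversal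
      hu hv huv⟩
end
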